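/- arXiv:cs/0501024 — 6 statements merged into one kernel-verified Lean document; each statement's English description precedes it below -/
import Mathlib

section
/- Let X ⊆ ℝⁿ be open and f : X → ℝ a continuous function. Then f maps open subsets of X to open subsets of ℝ, provided f has no local extrema, i.e., for every open U ⊆ X and every x ∈ U there exist x₋, x₊ ∈ U with f(x₋) < f(x) < f(x₊). -/
theorem stmt_2 (n : ℕ) (X : Set (EuclideanSpace ℝ (Fin n))) (hX : IsOpen X)
    (f : EuclideanSpace ℝ (Fin n) → ℝ) (hf : ContinuousOn f X)
    (hext : ∀ U : Set (EuclideanSpace ℝ (Fin n)), U ⊆ X → IsOpen U →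
      ∀ x ∈ U, ∃ xm ∈ U, ∃ xp ∈ U, f xm < f x ∧ f x < f xp) :
    ∀ U : Set (EuclideanSpace ℝ (Fin n)), U ⊆ X → IsOpen U → IsOpen (f '' U) := by
  intro U hUX hU
  rw [isOpen_iff_forall_mem_open]
  rintro y ⟨x, hxU, rfl⟩
  obtain ⟨ε, hε, hball⟩ := Metric.isOpen_iff.mp hU x hxU
  set B := Metric.ball x ε with hB
  have hBX : B ⊆ X := hball.trans hUX
  obtain ⟨xm, hxm, xp, hxp, h1, h2⟩ :=
    hext B hBX Metric.isOpen_ball x (Metric.mem_ball_self hε)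
  have hconn : IsPreconnected (f '' B) :=
    ((convex_ball x ε).isPreconnected).image f (hf.mono hBX)
  have hIcc : Set.Icc (f xm) (f xp) ⊆ f '' B :=
    hconn.Icc_subset ⟨xm, hxm, rfl⟩ ⟨xp, hxp, rfl⟩
  refine ⟨Set.Ioo (f xm) (f xp), ?_, isOpen_Ioo, ⟨h1, h2⟩⟩
  exact fun z hz => (Set.image_mono hball) (hIcc (Set.Ioo_subset_Icc_self hz))
end

section
/- Let X ⊆ ℝ be open and connected and f : X → ℝ continuous and open. Then f is either strictly increasing or strictly decreasing on X. -/
open Set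

-- f constant case leads to contradiction; interior max via open map
lemma aux_inj (X : Set ℝ) (hXoc : X.OrdConnected)
    (f : ℝ → ℝ) (hf : ContinuousOn f X)
    (hopen : ∀ U : Set ℝ, U ⊆ X → IsOpen U → IsOpen (f '' U)) :
    Set.InjOn f X := by
  have key : ∀ a b, a ∈ X → b ∈ X → a < b → f a = f b → False := by
    intro a b ha hb hlt hab
    have hIcc : Icc a b ⊆ X := hXoc.out ha hb
    have hIoo : Ioo a b ⊆ X := (Ioo_subset_Icc_self).trans hIcc
    have hcont : ContinuousOn f (Icc a b) := hf.mono hIcc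
    have hopenIoo : IsOpen (f '' Ioo a b) := hopen _ hIoo isOpen_Ioo
    -- no point of Icc a b has f value > f a, else max attained in interior
    have hmax : ∀ x ∈ Icc a b, f x ≤ f a := by
      by_contra h
      push_neg at h
      obtain ⟨c, hc, hcmax⟩ := isCompact_Icc.exists_isMaxOn (nonempty_Icc.mpr hlt.le) hcont
      have hfc : f a < f c := by
        obtain ⟨x, hx, hfx⟩ := h
        exact hfx.trans_le (hcmax hx)
      have hcint : c ∈ Ioo a b := by
        rcases hc.1.lt_or_eq with h1 | h1
        · rcases hc.2.lt_or_eq with h2 | h2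
          · exact ⟨h1, h2⟩
          · exact absurd (h2 ▸ hab ▸ hfc) (lt_irrefl _)
        · exact absurd (h1 ▸ hfc) (lt_irrefl _)
      obtain ⟨ε, hε, hball⟩ := Metric.isOpen_iff.mp hopenIoo (f c) ⟨c, hcint, rfl⟩
      have : f c + ε / 2 ∈ f '' Ioo a b := hball (by simp [Real.dist_eq, abs_of_nonneg, hε.le]; linarith)
      obtain ⟨y, hy, hfy⟩ := this
      have h2 : f y ≤ f c := hcmax (Ioo_subset_Icc_self hy)
      rw [hfy] at h2
      linarith
    have hmin : ∀ x ∈ Icc a b, f a ≤ f x := by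
      by_contra h
      push_neg at h
      obtain ⟨c, hc, hcmin⟩ := isCompact_Icc.exists_isMinOn (nonempty_Icc.mpr hlt.le) hcont
      have hfc : f c < f a := by
        obtain ⟨x, hx, hfx⟩ := h
        exact (hcmin hx).trans_lt hfx
      have hcint : c ∈ Ioo a b := by
        rcases hc.1.lt_or_eq with h1 | h1
        · rcases hc.2.lt_or_eq with h2 | h2
          · exact ⟨h1, h2⟩
          · exact absurd (h2 ▸ hab ▸ hfc) (lt_irrefl _)
        · exact absurd (h1 ▸ hfc) (lt_irrefl _)
      obtain ⟨ε, hε, hball⟩ := Metric.isOpen_iff.mp hopenIoo (f c) ⟨c, hcint, rfl⟩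
      have : f c - ε / 2 ∈ f '' Ioo a b := hball (by simp [Real.dist_eq, abs_of_nonneg, hε.le]; linarith)
      obtain ⟨y, hy, hfy⟩ := this
      have h2 : f c ≤ f y := hcmin (Ioo_subset_Icc_self hy)
      rw [hfy] at h2
      linarith
    -- f is constant f a on Icc a b, so image of Ioo is singleton, not open
    have himg : f '' Ioo a b = {f a} := by
      apply Subset.antisymm
      · rintro _ ⟨y, hy, rfl⟩
        exact le_antisymm (hmax y (Ioo_subset_Icc_self hy)) (hmin y (Ioo_subset_Icc_self hy))
      · rintro _ rfl
        set m := (a + b) / 2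
        have hm : m ∈ Ioo a b := ⟨by simp [m]; linarith, by simp [m]; linarith⟩
        exact ⟨m, hm, le_antisymm (hmax m (Ioo_subset_Icc_self hm)) (hmin m (Ioo_subset_Icc_self hm))⟩
    rw [himg] at hopenIoo
    exact (not_isOpen_singleton (f a)) hopenIoo
  intro a ha b hb hab
  by_contra hne
  rcases Ne.lt_or_gt hne with hlt | hlt
  · exact key a b ha hb hlt hab
  · exact key b a hb ha hlt hab.symm

theorem stmt_6 (X : Set ℝ) (hX : IsOpen X) (hXc : IsConnected X)
    (f : ℝ → ℝ) (hf : ContinuousOn f X)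
    (hopen : ∀ U : Set ℝ, U ⊆ X → IsOpen U → IsOpen (f '' U)) :
    StrictMonoOn f X ∨ StrictAntiOn f X := by
  have hXoc : X.OrdConnected := hXc.isPreconnected.ordConnected
  have hinj : Set.InjOn f X := aux_inj X hXoc f hf hopen
  by_cases hmono : ∃ a ∈ X, ∃ b ∈ X, a < b ∧ f a < f b
  · left
    obtain ⟨a, ha, b, hb, hab, hfab⟩ := hmono
    intro x hx y hy hxy
    set s := min a x
    set t := max b y
    have hs : s ∈ X := by rcases min_cases a x with ⟨h, _⟩ | ⟨h, _⟩ <;> simp [s, h, ha, hx]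
    have ht : t ∈ X := by rcases max_cases b y with ⟨h, _⟩ | ⟨h, _⟩ <;> simp [t, h, hb, hy]
    have hst : Icc s t ⊆ X := hXoc.out hs ht
    have habm : a ∈ Icc s t := ⟨min_le_left _ _, le_max_of_le_left hab.le⟩
    have hbm : b ∈ Icc s t := ⟨(min_le_left a x).trans hab.le, le_max_left _ _⟩
    have hxm : x ∈ Icc s t := ⟨min_le_right _ _, le_max_of_le_right hxy.le⟩
    have hym : y ∈ Icc s t := ⟨(min_le_right a x).trans hxy.le, le_max_right _ _⟩
    have hst' : s ≤ t := hxm.1.trans hxm.2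
    rcases (hf.mono hst).strictMonoOn_of_injOn_Icc' hst' (hinj.mono hst) with h | h
    · exact h hxm hym hxy
    · exact absurd (h habm hbm hab) (not_lt.mpr hfab.le)
  · right
    push_neg at hmono
    intro x hx y hy hxy
    exact lt_of_le_of_ne (hmono x hx y hy hxy) (fun h => (ne_of_gt hxy) (hinj hy hx h))
end

section
/- Let F be a field, E a field extension of F, and f, g ∈ F[X₁,…,Xₙ] polynomials. If h ∈ E[X₁,…,Xₙ] is a greatest common divisor of f and g considered as polynomials over E, then there is a nonzero λ ∈ E such that λ·h has all coefficients in F. -/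
/-! Write `f = c * f'` and `g = c * g'` with `f'`, `g'` coprime over `F`. An `F`-basis of `E` is
an `F[X]`-basis of `E[X]`, so divisibility in `E[X]` by a polynomial over `F` can be tested
coordinatewise, and the coprimality of `f'` and `g'` survives the extension. Hence `c` is also a
gcd of `f` and `g` over `E`, and `h` is `c` times a unit of `E[X]`, that is, a nonzero constant. -/

theorem exists_mul_isRelPrime {α : Type*} [CommMonoidWithZero α] [UniqueFactorizationMonoid α]
    (a b : α) : ∃ c a' b', a = c * a' ∧ b = c * b' ∧ IsRelPrime a' b' := by
  let := UniqueFactorizationMonoid.toGCDMonoid α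
  obtain ⟨a', b', ha, hb, hu⟩ := extract_gcd a b
  exact ⟨gcd a b, a', b', ha, hb, gcd_isUnit_iff_isRelPrime.mp hu⟩

namespace Module.Basis

variable {ι R S : Type*} [CommRing R] [CommRing S] [Algebra R S]

theorem algebraMap_dvd_iff (B : Basis ι R S) {r : R} {p : S} :
    algebraMap R S r ∣ p ↔ ∀ i, r ∣ B.repr p i := by
  constructor
  · rintro ⟨q, rfl⟩ i
    rw [← Algebra.smul_def, map_smul, Finsupp.smul_apply, smul_eq_mul]
    exact dvd_mul_right r _
  · intro h
    rw [← B.linearCombination_repr p, Finsupp.linearCombination_apply]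
    refine Finset.dvd_sum fun i _ => ?_
    dsimp only
    rw [Algebra.smul_def]
    exact dvd_mul_of_dvd_left (map_dvd _ (h i)) _

end Module.Basis

section FreeAlgebra

variable {R S : Type*} [CommRing R] [CommRing S] [Algebra R S] [Module.Free R S]
  [DecompositionMonoid R]

theorem IsRelPrime.algebraMap_dvd_of_dvd_mul {a b : R} {p : S}
    (hab : IsRelPrime a b) (h : algebraMap R S b ∣ p * algebraMap R S a) :
    algebraMap R S b ∣ p := by
  let B := Module.Free.chooseBasis R S
  rw [B.algebraMap_dvd_iff] at h ⊢
  intro i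
  have hi := h i
  rw [mul_comm, ← Algebra.smul_def, map_smul, Finsupp.smul_apply, smul_eq_mul] at hi
  exact hab.symm.dvd_of_dvd_mul_left hi

theorem IsRelPrime.map_algebraMap [IsDomain S] [FaithfulSMul R S] {a b : R}
    (hab : IsRelPrime a b) : IsRelPrime (algebraMap R S a) (algebraMap R S b) := by
  rcases eq_or_ne b 0 with rfl | hb
  · rw [isRelPrime_zero_right] at hab
    rw [map_zero, isRelPrime_zero_right]
    exact hab.map _
  rintro d ⟨a₁, ha₁⟩ ⟨b₁, hb₁⟩
  obtain ⟨c, hc⟩ : algebraMap R S b ∣ b₁ :=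
    hab.algebraMap_dvd_of_dvd_mul (p := b₁) ⟨a₁, by rw [ha₁, hb₁]; ring⟩
  have hb' : algebraMap R S b ≠ 0 :=
    (map_ne_zero_iff _ (FaithfulSMul.algebraMap_injective R S)).mpr hb
  refine IsUnit.of_mul_eq_one (a := d) c (mul_left_cancel₀ hb' ?_)
  calc algebraMap R S b * (d * c) = d * b₁ := by rw [hc]; ring
    _ = _ := by rw [← hb₁, mul_one]

end FreeAlgebra

namespace MvPolynomial

variable {σ R S : Type*} [CommRing R] [CommRing S] [Algebra R S]

section

attribute [local instance] algebraMvPolynomial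

theorem free_of_free [Module.Free R S] : Module.Free (MvPolynomial σ R) (MvPolynomial σ S) :=
  (Algebra.IsPushout.out (R := R) (S := MvPolynomial σ R) (R' := S)).free

theorem isRelPrime_map [IsDomain R] [UniqueFactorizationMonoid R] [IsDomain S] [Module.Free R S]
    [FaithfulSMul R S] {a b : MvPolynomial σ R} (hab : IsRelPrime a b) :
    IsRelPrime (map (algebraMap R S) a) (map (algebraMap R S) b) :=
  have := free_of_free (σ := σ) (R := R) (S := S)
  hab.map_algebraMap (S := MvPolynomial σ S)

end

theorem exists_associated_map_of_isGCD [IsDomain R] [UniqueFactorizationMonoid R] [IsDomain S]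
    [Module.Free R S] [FaithfulSMul R S] {f g : MvPolynomial σ R} {h : MvPolynomial σ S}
    (hf : h ∣ map (algebraMap R S) f) (hg : h ∣ map (algebraMap R S) g)
    (hgcd : ∀ d, d ∣ map (algebraMap R S) f → d ∣ map (algebraMap R S) g → d ∣ h) :
    ∃ c, Associated (map (algebraMap R S) c) h := by
  obtain ⟨c, f', g', rfl, rfl, hcop⟩ := exists_mul_isRelPrime f g
  obtain ⟨u, rfl⟩ := hgcd _ (map_dvd _ (dvd_mul_right c f')) (map_dvd _ (dvd_mul_right c g'))
  refine ⟨c, ?_⟩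
  rcases eq_or_ne (map (algebraMap R S) c) 0 with hc | hc
  · rw [hc, zero_mul]
  rw [map_mul, mul_dvd_mul_iff_left hc] at hf hg
  exact associated_mul_unit_right _ _ (isRelPrime_map hcop hf hg)

end MvPolynomial

theorem stmt_10 (n : ℕ) (F E : Type*) [Field F] [Field E] [Algebra F E]
    (f g : MvPolynomial (Fin n) F) (h : MvPolynomial (Fin n) E)
    (hdvdf : h ∣ MvPolynomial.map (algebraMap F E) f)
    (hdvdg : h ∣ MvPolynomial.map (algebraMap F E) g)
    (hgcd : ∀ d : MvPolynomial (Fin n) E,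
      d ∣ MvPolynomial.map (algebraMap F E) f → d ∣ MvPolynomial.map (algebraMap F E) g →
        d ∣ h) :
    ∃ lam : E, lam ≠ 0 ∧ ∃ h₀ : MvPolynomial (Fin n) F,
      MvPolynomial.map (algebraMap F E) h₀ = lam • h := by
  obtain ⟨h₀, u, rfl⟩ := MvPolynomial.exists_associated_map_of_isGCD hdvdf hdvdg hgcd
  obtain ⟨μ, hμ, hu⟩ := MvPolynomial.isUnit_iff_eq_C_of_isReduced.mp u.isUnit
  refine ⟨μ⁻¹, inv_ne_zero hμ.ne_zero, h₀, ?_⟩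
  rw [hu, MvPolynomial.smul_eq_C_mul, mul_left_comm, ← MvPolynomial.C_mul,
    inv_mul_cancel₀ hμ.ne_zero, MvPolynomial.C_1, mul_one]
end

section
/- There exists a function h : ℝ → ℝ such that for every nonempty open interval (a,b) with a < b, the image h[(a,b)] equals the open interval (0,1). -/
set_option maxHeartbeats 1000000

open Real

noncomputable section StmtAux

/-- A bijection-onto-`(0,1)` map. -/
private def sigmaFn (t : ℝ) : ℝ := Real.arctan t / Real.pi + 1/2

private lemma sigmaFn_mem (t : ℝ) : sigmaFn t ∈ Set.Ioo (0:ℝ) 1 := by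
  have hπ : (0:ℝ) < Real.pi := Real.pi_pos
  have h1 : Real.arctan t < Real.pi / 2 := Real.arctan_lt_pi_div_two t
  have h2 : -(Real.pi/2) < Real.arctan t := Real.neg_pi_div_two_lt_arctan t
  have h12 : Real.pi/2/Real.pi = 1/2 := by
    rw [div_right_comm, div_self (ne_of_gt hπ)]
  have hA : -(Real.pi/2)/Real.pi < Real.arctan t / Real.pi :=
    (div_lt_div_iff_of_pos_right hπ).2 h2
  have hBd : Real.arctan t / Real.pi < Real.pi/2/Real.pi :=
    (div_lt_div_iff_of_pos_right hπ).2 h1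
  rw [neg_div, h12] at hA
  rw [h12] at hBd
  unfold sigmaFn
  constructor <;> linarith

private lemma sigmaFn_surj {y : ℝ} (hy : y ∈ Set.Ioo (0:ℝ) 1) : ∃ t, sigmaFn t = y := by
  have hπ : (0:ℝ) < Real.pi := Real.pi_pos
  obtain ⟨hy0, hy1⟩ := hy
  refine ⟨Real.tan ((y - 1/2) * Real.pi), ?_⟩
  have hlb : -(Real.pi/2) < (y - 1/2) * Real.pi := by nlinarith
  have hub : (y - 1/2) * Real.pi < Real.pi/2 := by nlinarith
  unfold sigmaFn
  rw [Real.arctan_tan hlb hub, mul_div_cancel_right₀ _ (ne_of_gt hπ)]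
  ring

end StmtAux

theorem stmt_13 :
    ∃ h : ℝ → ℝ, ∀ a b : ℝ, a < b → h '' Set.Ioo a b = Set.Ioo (0 : ℝ) 1 := by
  classical
  set B := Module.Basis.ofVectorSpace ℚ ℝ with hB
  set ι := Module.Basis.ofVectorSpaceIndex ℚ ℝ
  -- ι is infinite
  have hinf : Infinite ι := by
    by_contra hfin
    rw [not_infinite_iff_finite] at hfin
    have : Countable ℝ := Countable.of_equiv (ι →₀ ℚ) B.repr.toEquiv.symm
    exact Cardinal.not_countable_real Set.countable_univ
  haveI := hinf
  let e := Infinite.natEmbedding ι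
  -- a surjective, non-injective self-map of ι
  let s : ι → ι := fun x => if h : ∃ n, e n = x then e (Classical.choose h - 1) else x
  have hs_e : ∀ m : ℕ, s (e m) = e (m - 1) := by
    intro m
    have h : ∃ n, e n = e m := ⟨m, rfl⟩
    have : Classical.choose h = m := e.injective (Classical.choose_spec h)
    simp only [s, dif_pos h, this]
  have hs_surj : Function.Surjective s := by
    intro y
    by_cases h : ∃ n, e n = y
    · obtain ⟨m, rfl⟩ := h
      exact ⟨e (m+1), by simp [hs_e]⟩
    · exact ⟨y, dif_neg h⟩
  -- the linear map
  let φ : ℝ →ₗ[ℚ] ℝ := B.constr ℚ (fun i => B (s i))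
  have hφB : ∀ i, φ (B i) = B (s i) := fun i => B.constr_basis ℚ _ i
  have hφ_surj : Function.Surjective φ := by
    rw [← LinearMap.range_eq_top]
    have hsub : Set.range B ⊆ (LinearMap.range φ : Set ℝ) := by
      rintro _ ⟨j, rfl⟩
      obtain ⟨i, rfl⟩ := hs_surj j
      exact ⟨B i, hφB i⟩
    have := Submodule.span_le.2 hsub
    rw [B.span_eq] at this
    exact top_le_iff.1 this
  -- nonzero kernel element
  have hcol : s (e 1) = s (e 0) := by simp [hs_e]
  set k : ℝ := B (e 1) - B (e 0) with hk
  have hφk : φ k = 0 := by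
    rw [hk, map_sub, hφB, hφB, hcol, sub_self]
  have hkne : k ≠ 0 := by
    rw [hk, sub_ne_zero]
    exact fun hEq => by simpa using e.injective (B.injective hEq)
  -- positive kernel element
  set k₀ : ℝ := |k| with hk₀
  have hk₀pos : 0 < k₀ := abs_pos.2 hkne
  have hφk₀ : φ k₀ = 0 := by
    rcases abs_choice k with h | h
    · rw [hk₀, h, hφk]
    · rw [hk₀, h, map_neg, hφk, neg_zero]
  -- main construction
  refine ⟨fun x => sigmaFn (φ x), ?_⟩
  intro a b hab
  apply Set.Subset.antisymm
  · rintro _ ⟨x, -, rfl⟩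
    exact sigmaFn_mem _
  · rintro y hy
    obtain ⟨t, ht⟩ := sigmaFn_surj hy
    obtain ⟨x, hx⟩ := hφ_surj t
    have hmul : ∀ q : ℚ, x + (q:ℝ) * k₀ = x + q • k₀ := fun q => by rw [Rat.smul_def]
    have hkey : ∀ q : ℚ, φ (x + q • k₀) = φ x := fun q => by
      rw [map_add, map_smul, hφk₀, smul_zero, add_zero]
    obtain ⟨q, hq1, hq2⟩ := exists_rat_btwn ((div_lt_div_iff_of_pos_right hk₀pos).2
      (sub_lt_sub_right hab x) : (a - x)/k₀ < (b - x)/k₀)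
    refine ⟨x + (q:ℝ) * k₀, ⟨?_, ?_⟩, ?_⟩
    · have := (div_lt_iff₀ hk₀pos).1 hq1
      linarith
    · have := (lt_div_iff₀ hk₀pos).1 hq2
      linarith
    · show sigmaFn (φ (x + (q:ℝ) * k₀)) = y
      rw [hmul q, hkey q, hx, ht]
end

section
/- There exist open functions f₁, f₂ : ℝ → ℝ with f₁ ≠ f₂ such that f₁[U] = f₂[U] for every open set U ⊆ ℝ. -/
noncomputable section

/-- The rationals as an additive subgroup of ℝ. -/
def Qsub : AddSubgroup ℝ := AddMonoidHom.range ((Rat.castHom ℝ : ℚ →+* ℝ) : ℚ →+ ℝ)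

abbrev Gquot := ℝ ⧸ Qsub

lemma Qsub_countable : Countable Qsub := by
  have : Countable (Set.range ((↑) : ℚ → ℝ)) := Set.countable_range _ |>.to_subtype
  exact this

lemma mk_Gquot : Cardinal.mk ℝ ≤ Cardinal.mk Gquot := by
  have e : ℝ ≃ Gquot × Qsub := AddSubgroup.addGroupEquivQuotientProdAddSubgroup (s := Qsub)
  have h1 : Cardinal.mk ℝ = Cardinal.mk Gquot * Cardinal.mk Qsub := by
    have := Cardinal.mk_congr e
    rwa [Cardinal.mk_prod, Cardinal.lift_id, Cardinal.lift_id] at this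
  have hq : Cardinal.mk Qsub ≤ Cardinal.aleph0 := by
    have := Qsub_countable
    exact Cardinal.mk_le_aleph0
  by_contra hcon
  push_neg at hcon
  have hle : Cardinal.mk ℝ ≤ Cardinal.mk Gquot * Cardinal.aleph0 := by
    rw [h1]; exact mul_le_mul_right hq _
  have hmax : Cardinal.mk ℝ ≤ max (Cardinal.mk Gquot) Cardinal.aleph0 := by
    calc Cardinal.mk ℝ ≤ Cardinal.mk Gquot * Cardinal.aleph0 := hle
      _ ≤ max (Cardinal.mk Gquot) Cardinal.aleph0 * max (Cardinal.mk Gquot) Cardinal.aleph0 :=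
          mul_le_mul' (le_max_left _ _) (le_max_right _ _)
      _ = max (Cardinal.mk Gquot) Cardinal.aleph0 :=
          Cardinal.mul_eq_self (le_max_right _ _)
  rcases max_cases (Cardinal.mk Gquot) Cardinal.aleph0 with ⟨h1', _⟩ | ⟨h1', _⟩
  · rw [h1'] at hmax; exact absurd hmax (not_le.mpr hcon)
  · rw [h1'] at hmax
    have : Cardinal.aleph0 < Cardinal.mk ℝ := by
      simpa [Cardinal.mk_real] using Cardinal.aleph0_lt_continuum
    exact absurd hmax (not_le.mpr this)

def emb : ℝ ↪ Gquot := Classical.choice ((Cardinal.le_def _ _).mp mk_Gquot)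

/-- A surjection from the quotient onto ℝ. -/
def phi : Gquot → ℝ := Function.invFun (emb : ℝ → Gquot)

lemma phi_surj : Function.Surjective phi :=
  Function.invFun_surjective emb.injective

def hfun : ℝ → ℝ := fun x => phi (QuotientAddGroup.mk x)

lemma hfun_image (U : Set ℝ) (hU : IsOpen U) (hne : U.Nonempty) : hfun '' U = Set.univ := by
  apply Set.eq_univ_of_forall
  intro r
  obtain ⟨g, hg⟩ := phi_surj r
  obtain ⟨y, rfl⟩ := QuotientAddGroup.mk_surjective g
  -- the coset y + ℚ is dense, so it meets U
  have hd : Dense (Set.range (fun q : ℚ => y + (q : ℝ))) := by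
    have heq : Set.range (fun q : ℚ => y + (q : ℝ))
        = (fun z : ℝ => y + z) '' Set.range ((↑) : ℚ → ℝ) := by
      rw [← Set.range_comp]; rfl
    rw [heq]
    exact ((Homeomorph.addLeft y).surjective.denseRange.dense_image
      (Homeomorph.addLeft y).continuous Rat.denseRange_cast)
  obtain ⟨x, hxmem, hxU⟩ := hd.exists_mem_open hU hne
  obtain ⟨q, rfl⟩ := hxmem
  refine ⟨y + (q : ℝ), hxU, ?_⟩
  have hq : QuotientAddGroup.mk (y + (q : ℝ)) = (QuotientAddGroup.mk y : Gquot) := by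
    rw [QuotientAddGroup.eq]
    exact ⟨-q, by simp⟩
  simp only [hfun, hq, hg]

lemma hfun2_image (U : Set ℝ) (hU : IsOpen U) (hne : U.Nonempty) :
    (fun x => hfun x + 1) '' U = Set.univ := by
  have : (fun x => hfun x + 1) '' U = (fun z => z + 1) '' (hfun '' U) := by
    rw [Set.image_image]
  rw [this, hfun_image U hU hne]
  apply Set.eq_univ_of_forall
  intro r
  exact ⟨r - 1, trivial, by ring⟩

theorem stmt_14 :
    ∃ f₁ f₂ : ℝ → ℝ,
      (∀ U : Set ℝ, IsOpen U → IsOpen (f₁ '' U)) ∧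
      (∀ U : Set ℝ, IsOpen U → IsOpen (f₂ '' U)) ∧
      f₁ ≠ f₂ ∧
      (∀ U : Set ℝ, IsOpen U → f₁ '' U = f₂ '' U) := by
  refine ⟨hfun, fun x => hfun x + 1, ?_, ?_, ?_, ?_⟩
  · intro U hU
    rcases U.eq_empty_or_nonempty with rfl | hne
    · simp
    · rw [hfun_image U hU hne]; exact isOpen_univ
  · intro U hU
    rcases U.eq_empty_or_nonempty with rfl | hne
    · simp
    · rw [hfun2_image U hU hne]; exact isOpen_univ
  · intro h
    have := congrFun h 0
    simp at this
  · intro U hU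
    rcases U.eq_empty_or_nonempty with rfl | hne
    · simp
    · rw [hfun_image U hU hne, hfun2_image U hU hne]

end
end

section
/- Let p, q ∈ ℝ[X₁,…,Xₙ] be coprime polynomials, X ⊆ ℝⁿ a nonempty open set on which q does not vanish, and suppose the rational function p/q takes values in a subfield F ⊆ ℝ at every point of some grid X₁ × ⋯ × Xₙ ⊆ X where each Xᵢ ⊆ F has cardinality d > deg p + deg q. If the linear system expressing p(x_j) − y_j·q(x_j) = 0 over all grid points x_j (with y_j = p(x_j)/q(x_j) ∈ F) admits a nonzero solution with coefficients in F, then there exists a nonzero λ ∈ ℝ with λp, λq ∈ F[X₁,…,Xₙ]. -/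
/-!
A nonzero solution `(p', q')` of the linear system gives `p' q = p q'` at every grid point, and
since the grid is larger than `deg p + deg q` in every direction this is an identity of
polynomials. Coprimality then gives `q ∣ q'`, and `deg q' ≤ deg q` forces `q' = λ q` and
`p' = λ p` for a nonzero constant `λ`, so `λ` rescales `p` and `q` to have coefficients in `F`.
-/

open MvPolynomial Finset

namespace MvPolynomial

variable {σ R : Type*} [CommRing R] [IsDomain R]

theorem mul_eq_mul_of_eval_eq_on_grid [Finite σ] {p q p' q' : MvPolynomial σ R}
    (S : σ → Finset R) (hS : ∀ i, p.totalDegree + q.totalDegree < #(S i))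
    (hp' : p'.totalDegree ≤ p.totalDegree) (hq' : q'.totalDegree ≤ q.totalDegree)
    (h : ∀ x : σ → R, (∀ i, x i ∈ S i) → eval x p' * eval x q = eval x p * eval x q') :
    p' * q = p * q' := by
  rw [← sub_eq_zero]
  refine eq_zero_of_eval_zero_at_prod_finset _ S (fun i => ?_) fun x hx => ?_
  · have hdeg : (p' * q - p * q').totalDegree ≤ p.totalDegree + q.totalDegree :=
      (totalDegree_sub _ _).trans <| max_le
        ((totalDegree_mul _ _).trans (by omega)) ((totalDegree_mul _ _).trans (by omega))
    exact ((degreeOf_le_totalDegree _ i).trans hdeg).trans_lt (hS i)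
  · simp only [map_sub, map_mul, h x hx, sub_self]

theorem exists_eq_C_mul_of_dvd_of_totalDegree_le {q q' : MvPolynomial σ R} (hdvd : q ∣ q')
    (hq' : q' ≠ 0) (hdeg : q'.totalDegree ≤ q.totalDegree) : ∃ c, q' = C c * q := by
  obtain ⟨r, rfl⟩ := hdvd
  obtain ⟨hq, hr⟩ := mul_ne_zero_iff.mp hq'
  rw [totalDegree_mul_of_isDomain hq hr] at hdeg
  exact ⟨r.coeff 0, by rw [mul_comm, ← totalDegree_eq_zero_iff_eq_C.mp (by omega)]⟩

theorem exists_C_mul_eq_of_mul_eq_mul_of_isCoprime {p q p' q' : MvPolynomial σ R}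
    (hcop : IsCoprime p q) (hq : q ≠ 0) (hq' : q'.totalDegree ≤ q.totalDegree)
    (hne : ¬(p' = 0 ∧ q' = 0)) (h : p' * q = p * q') :
    ∃ c ≠ 0, p' = C c * p ∧ q' = C c * q := by
  have hq'ne : q' ≠ 0 := by
    rintro rfl
    exact hne ⟨(mul_eq_zero.mp (h.trans (mul_zero p))).resolve_right hq, rfl⟩
  obtain ⟨c, rfl⟩ := exists_eq_C_mul_of_dvd_of_totalDegree_le
    (hcop.symm.dvd_of_dvd_mul_left ⟨p', by rw [← h, mul_comm]⟩) hq'ne hq'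
  refine ⟨c, fun hc => hq'ne (by simp [hc]), mul_right_cancel₀ hq ?_, rfl⟩
  rw [h]
  ring

end MvPolynomial

theorem stmt_19_general (n : ℕ) (F : Subfield ℝ)
    (p q : MvPolynomial (Fin n) ℝ) (hcop : IsCoprime p q)
    (X : Set (Fin n → ℝ))
    (hq : ∀ x ∈ X, MvPolynomial.eval x q ≠ 0)
    (d : ℕ) (hd : p.totalDegree + q.totalDegree < d)
    (G : Fin n → Finset ℝ) (hGcard : ∀ i, (G i).card = d)
    (hGX : ∀ x : Fin n → ℝ, (∀ i, x i ∈ G i) → x ∈ X)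
    -- the linear system admits a nonzero solution with coefficients in F:
    (hsol : ∃ p' q' : MvPolynomial (Fin n) ℝ,
      ¬ (p' = 0 ∧ q' = 0) ∧
      (∀ k, MvPolynomial.coeff k p' ∈ F) ∧ (∀ k, MvPolynomial.coeff k q' ∈ F) ∧
      p'.totalDegree ≤ p.totalDegree ∧ q'.totalDegree ≤ q.totalDegree ∧
      (∀ x : Fin n → ℝ, (∀ i, x i ∈ G i) →
        MvPolynomial.eval x p' -
          (MvPolynomial.eval x p / MvPolynomial.eval x q) * MvPolynomial.eval x q' = 0)) :
    ∃ lam : ℝ, lam ≠ 0 ∧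
      (∀ k, lam * MvPolynomial.coeff k p ∈ F) ∧
      (∀ k, lam * MvPolynomial.coeff k q ∈ F) := by
  obtain ⟨p', q', hne, hpF, hqF, hpd, hqd, hlin⟩ := hsol
  have hqG : ∀ x : Fin n → ℝ, (∀ i, x i ∈ G i) → eval x q ≠ 0 := fun x hx => hq x (hGX x hx)
  have hq0 : q ≠ 0 := by
    choose x₀ hx₀ using fun i => card_pos.mp (by rw [hGcard i]; omega : 0 < (G i).card)
    exact fun h => hqG x₀ hx₀ (by simp [h])
  have hcross : p' * q = p * q' := by
    refine mul_eq_mul_of_eval_eq_on_grid G (fun i => hGcard i ▸ hd) hpd hqd fun x hx => ?_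
    have := hlin x hx
    field_simp [hqG x hx] at this
    linear_combination this
  obtain ⟨c, hc, rfl, rfl⟩ :=
    exists_C_mul_eq_of_mul_eq_mul_of_isCoprime hcop hq0 hqd hne hcross
  exact ⟨c, hc, fun k => by simpa only [coeff_C_mul] using hpF k,
    fun k => by simpa only [coeff_C_mul] using hqF k⟩

theorem stmt_19 (n : ℕ) (F : Subfield ℝ)
    (p q : MvPolynomial (Fin n) ℝ) (hcop : IsCoprime p q)
    (X : Set (Fin n → ℝ)) (hXne : X.Nonempty) (hXopen : IsOpen X)
    (hq : ∀ x ∈ X, MvPolynomial.eval x q ≠ 0)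
    (d : ℕ) (hd : p.totalDegree + q.totalDegree < d)
    (G : Fin n → Finset ℝ) (hGF : ∀ i, ∀ a ∈ G i, a ∈ F) (hGcard : ∀ i, (G i).card = d)
    (hGX : ∀ x : Fin n → ℝ, (∀ i, x i ∈ G i) → x ∈ X)
    (hval : ∀ x : Fin n → ℝ, (∀ i, x i ∈ G i) →
      MvPolynomial.eval x p / MvPolynomial.eval x q ∈ F)
    -- the linear system admits a nonzero solution with coefficients in F:
    (hsol : ∃ p' q' : MvPolynomial (Fin n) ℝ,
      ¬ (p' = 0 ∧ q' = 0) ∧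
      (∀ k, MvPolynomial.coeff k p' ∈ F) ∧ (∀ k, MvPolynomial.coeff k q' ∈ F) ∧
      p'.totalDegree ≤ p.totalDegree ∧ q'.totalDegree ≤ q.totalDegree ∧
      (∀ x : Fin n → ℝ, (∀ i, x i ∈ G i) →
        MvPolynomial.eval x p' -
          (MvPolynomial.eval x p / MvPolynomial.eval x q) * MvPolynomial.eval x q' = 0)) :
    ∃ lam : ℝ, lam ≠ 0 ∧
      (∀ k, lam * MvPolynomial.coeff k p ∈ F) ∧
      (∀ k, lam * MvPolynomial.coeff k q ∈ F) :=
  stmt_19_general n F p q hcop X hq d hd G hGcard hGX hsol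
end
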